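/- Let G be a PLB graph on n vertices with exponent γ > 1 and constant c₀. Then the degeneracy of G is at most C · n^{1/γ} for a constant C depending only on c₀ and γ; that is, every nonempty induced subgraph of G contains a vertex whose degree within that subgraph is at most C · n^{1/γ}. -/

import Mathlib

/-- The number of vertices of `G` of degree exactly `d`. -/
noncomputable def degCount {V : Type*} [Fintype V] (G : SimpleGraph V) (d : ℕ) : ℕ :=
  {v : V | {u | G.Adj v u}.ncard = d}.ncard

/-- `G` is power-law bounded with exponent `γ` and constant `c₀` if for every `r ≥ 0`,
`Σ_{d=2^r}^{2^(r+1)} n(d) ≤ c₀ n Σ_{d=2^r}^{2^(r+1)} d^(-γ)`. -/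
def IsPLB {V : Type*} [Fintype V] (G : SimpleGraph V) (γ c₀ : ℝ) : Prop :=
  ∀ r : ℕ,
    (∑ d ∈ Finset.Icc (2 ^ r : ℕ) (2 ^ (r + 1)), (degCount G d : ℝ)) ≤
      c₀ * (Fintype.card V : ℝ) *
        ∑ d ∈ Finset.Icc (2 ^ r : ℕ) (2 ^ (r + 1)), (d : ℝ) ^ (-γ)

/-- The out-degree of `v` when each edge of `G` is directed from its lower-degree
endpoint to its higher-degree endpoint (ties broken by the linear order): the number
of neighbors `u` of `v` with `deg u > deg v`, or `deg u = deg v` and `v < u`. -/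
noncomputable def outDeg {V : Type*} [Fintype V] [LinearOrder V]
    (G : SimpleGraph V) (v : V) : ℕ :=
  {u : V | G.Adj v u ∧
    ({w | G.Adj v w}.ncard < {w | G.Adj u w}.ncard ∨
      ({w | G.Adj u w}.ncard = {w | G.Adj v w}.ncard ∧ v < u))}.ncard

/-!
If every vertex of a nonempty `A` had more than `T` neighbours inside `A`, then `A` would consist
of more than `T` vertices of degree greater than `T`. In a PLB graph at most `2 c₀ n 2^{r(1-γ)}`
vertices have degree in `[2^r, 2^{r+1}]`; summing this geometric series over `2^r > T/2` bounds
the number of vertices of degree greater than `T` by `K n T^{1-γ}`, which is at most `T` as soon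
as `T = C n^{1/γ}` with `C^γ ≥ K`.
-/

open Finset

lemma sum_Icc_two_pow_rpow_neg_le {γ : ℝ} (hγ : 0 ≤ γ) (r : ℕ) :
    ∑ d ∈ Icc (2 ^ r : ℕ) (2 ^ (r + 1)), (d : ℝ) ^ (-γ) ≤ 2 * ((2 : ℝ) ^ (1 - γ)) ^ r := by
  have hterm : ∀ d ∈ Icc (2 ^ r : ℕ) (2 ^ (r + 1)), (d : ℝ) ^ (-γ) ≤ ((2 : ℝ) ^ r) ^ (-γ) :=
    fun d hd ↦ Real.rpow_le_rpow_of_nonpos (by positivity)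
      (by exact_mod_cast (mem_Icc.mp hd).1) (by linarith)
  have hcard : ((Icc (2 ^ r : ℕ) (2 ^ (r + 1))).card : ℝ) ≤ 2 * 2 ^ r := by
    rw [Nat.card_Icc, pow_succ]
    have : 1 ≤ 2 ^ r := Nat.one_le_two_pow
    exact_mod_cast (by omega : 2 ^ r * 2 + 1 - 2 ^ r ≤ 2 * 2 ^ r)
  calc ∑ d ∈ Icc (2 ^ r : ℕ) (2 ^ (r + 1)), (d : ℝ) ^ (-γ)
      ≤ (Icc (2 ^ r : ℕ) (2 ^ (r + 1))).card * ((2 : ℝ) ^ r) ^ (-γ) := by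
        simpa using sum_le_card_nsmul _ _ _ hterm
    _ ≤ 2 * (2 ^ r * ((2 : ℝ) ^ r) ^ (-γ)) := by
        rw [← mul_assoc]; gcongr
    _ = 2 * ((2 : ℝ) ^ r) ^ (1 - γ) := by
        rw [Real.rpow_sub (by positivity), Real.rpow_one, Real.rpow_neg (by positivity),
          div_eq_mul_inv]
    _ = 2 * ((2 : ℝ) ^ (1 - γ)) ^ r := by
        rw [← Real.rpow_natCast_mul zero_le_two, ← Real.rpow_mul_natCast zero_le_two,
          mul_comm (r : ℝ)]

lemma card_filter_two_pow_le_le_sum {α : Type*} [DecidableEq α] (s : Finset α) (f : α → ℕ) {a N : ℕ}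
    (hN : ∀ x ∈ s, f x < 2 ^ N) :
    #{x ∈ s | 2 ^ a ≤ f x} ≤ ∑ r ∈ Ico a N, #{x ∈ s | f x ∈ Icc (2 ^ r) (2 ^ (r + 1))} := by
  refine (card_le_card fun x hx ↦ ?_).trans card_biUnion_le
  obtain ⟨hxs, hax⟩ := mem_filter.mp hx
  have hfx : f x ≠ 0 := (Nat.two_pow_pos a).trans_le hax |>.ne'
  refine mem_biUnion.mpr ⟨Nat.log 2 (f x), mem_Ico.mpr ⟨?_, ?_⟩, mem_filter.mpr ⟨hxs, ?_⟩⟩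
  · exact Nat.le_log_of_pow_le one_lt_two hax
  · exact Nat.log_lt_of_lt_pow hfx (hN x hxs)
  · exact mem_Icc.mpr ⟨Nat.pow_log_le_self 2 hfx, (Nat.lt_pow_succ_log_self one_lt_two _).le⟩

namespace SimpleGraph

variable {V : Type*} [Fintype V] (G : SimpleGraph V) [DecidableRel G.Adj]

lemma ncard_setOf_adj_eq_degree (v : V) : {u | G.Adj v u}.ncard = G.degree v := by
  rw [← card_neighborFinset_eq_degree, ← Set.ncard_coe_finset]
  congr 1
  ext u
  simp

lemma degCount_eq_card_filter (d : ℕ) : degCount G d = #{v | G.degree v = d} := by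
  rw [degCount, ← Set.ncard_coe_finset]
  congr 1
  ext v
  simp [ncard_setOf_adj_eq_degree]

lemma card_filter_degree_mem_Icc (lo hi : ℕ) :
    #{v | G.degree v ∈ Icc lo hi} = ∑ d ∈ Icc lo hi, degCount G d := by
  rw [card_eq_sum_card_fiberwise (s := ({v | G.degree v ∈ Icc lo hi} : Finset V))
    (f := fun v ↦ G.degree v) (t := Icc lo hi) fun v hv ↦ (mem_filter.mp hv).2]
  refine sum_congr rfl fun d hd ↦ ?_
  rw [degCount_eq_card_filter, filter_filter]
  congr 1
  ext v
  simp only [mem_filter, mem_univ, true_and, and_iff_right_iff_imp]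
  rintro rfl
  exact hd

lemma exists_induce_ncard_adj_le (A : Set V) (hA : A.Nonempty) {T : ℝ}
    (hT : (#{v | T < G.degree v} : ℝ) ≤ T) :
    ∃ v : A, ({u : A | (G.induce A).Adj v u}.ncard : ℝ) ≤ T := by
  by_contra! h
  obtain ⟨v₀, hv₀⟩ := hA
  have hdegree : ∀ v : A, {u : A | (G.induce A).Adj v u}.ncard ≤ G.degree v := fun v ↦ by
    rw [← ncard_setOf_adj_eq_degree]
    exact Set.ncard_le_ncard_of_injOn Subtype.val (fun u hu ↦ hu) Subtype.val_injective.injOn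
  have hA_sub : A ⊆ ↑({v | T < G.degree v} : Finset V) := fun v hv ↦ by
    simpa using (h ⟨v, hv⟩).trans_le (by exact_mod_cast hdegree ⟨v, hv⟩)
  have hA_le : (A.ncard : ℝ) ≤ #{v | T < G.degree v} := by
    exact_mod_cast (Set.ncard_le_ncard hA_sub).trans_eq (Set.ncard_coe_finset _)
  have hcard : ({u : A | (G.induce A).Adj ⟨v₀, hv₀⟩ u}.ncard : ℝ) ≤ A.ncard := by
    exact_mod_cast
      Set.ncard_le_ncard_of_injOn Subtype.val (fun u _ ↦ u.2) Subtype.val_injective.injOn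
  linarith [h ⟨v₀, hv₀⟩]

end SimpleGraph

namespace IsPLB

variable {V : Type*} [Fintype V] {G : SimpleGraph V} [DecidableRel G.Adj] {γ c₀ : ℝ}

lemma card_degree_mem_dyadic_le (hG : IsPLB G γ c₀) (hc₀ : 0 ≤ c₀) (hγ : 0 ≤ γ) (r : ℕ) :
    (#{v | G.degree v ∈ Icc (2 ^ r) (2 ^ (r + 1))} : ℝ) ≤
      2 * c₀ * Fintype.card V * ((2 : ℝ) ^ (1 - γ)) ^ r := by
  calc (#{v | G.degree v ∈ Icc (2 ^ r) (2 ^ (r + 1))} : ℝ)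
      = ∑ d ∈ Icc (2 ^ r : ℕ) (2 ^ (r + 1)), (degCount G d : ℝ) := by
        rw [G.card_filter_degree_mem_Icc]
        push_cast
        rfl
    _ ≤ c₀ * Fintype.card V * ∑ d ∈ Icc (2 ^ r : ℕ) (2 ^ (r + 1)), (d : ℝ) ^ (-γ) := hG r
    _ ≤ c₀ * Fintype.card V * (2 * ((2 : ℝ) ^ (1 - γ)) ^ r) := by
        gcongr
        exact sum_Icc_two_pow_rpow_neg_le hγ r
    _ = 2 * c₀ * Fintype.card V * ((2 : ℝ) ^ (1 - γ)) ^ r := by ring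

lemma card_two_pow_le_degree_le (hG : IsPLB G γ c₀) (hc₀ : 0 ≤ c₀) (hγ : 1 < γ) (a : ℕ) :
    (#{v | 2 ^ a ≤ G.degree v} : ℝ) ≤
      2 * c₀ * Fintype.card V * ((2 : ℝ) ^ (1 - γ)) ^ a / (1 - 2 ^ (1 - γ)) := by
  classical
  set n := Fintype.card V
  set q : ℝ := 2 ^ (1 - γ)
  have hq1 : q < 1 := Real.rpow_lt_one_of_one_lt_of_neg one_lt_two (by linarith)
  have hdegree : ∀ v ∈ (univ : Finset V), G.degree v < 2 ^ n :=
    fun v _ ↦ (G.degree_lt_card_verts v).trans Nat.lt_two_pow_self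
  calc (#{v | 2 ^ a ≤ G.degree v} : ℝ)
      ≤ ∑ r ∈ Ico a n, (#{v | G.degree v ∈ Icc (2 ^ r) (2 ^ (r + 1))} : ℝ) := by
        exact_mod_cast card_filter_two_pow_le_le_sum (f := fun v ↦ G.degree v) univ hdegree
    _ ≤ ∑ r ∈ Ico a n, 2 * c₀ * n * q ^ r :=
        sum_le_sum fun r _ ↦ hG.card_degree_mem_dyadic_le hc₀ (by linarith) r
    _ = 2 * c₀ * n * ∑ r ∈ Ico a n, q ^ r := by rw [mul_sum]
    _ ≤ 2 * c₀ * n * (q ^ a / (1 - q)) := by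
        gcongr
        exact geom_sum_Ico_le_of_lt_one (by positivity) hq1
    _ = 2 * c₀ * n * q ^ a / (1 - q) := by ring

lemma card_lt_degree_le (hG : IsPLB G γ c₀) (hc₀ : 0 ≤ c₀) (hγ : 1 < γ) {T : ℝ} (hT : 1 ≤ T) :
    (#{v | T < G.degree v} : ℝ) ≤
      2 ^ γ * c₀ / (1 - 2 ^ (1 - γ)) * Fintype.card V * T ^ (1 - γ) := by
  obtain ⟨a, haT, hTa⟩ := exists_nat_pow_near hT one_lt_two
  have hq1 : (2 : ℝ) ^ (1 - γ) < 1 := Real.rpow_lt_one_of_one_lt_of_neg one_lt_two (by linarith)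
  have hsub : #{v | T < G.degree v} ≤ #{v | 2 ^ a ≤ G.degree v} :=
    card_le_card fun v hv ↦ by
      simp only [mem_filter, mem_univ, true_and] at hv ⊢
      exact_mod_cast haT.trans hv.le
  have hqa : ((2 : ℝ) ^ (1 - γ)) ^ a ≤ T ^ (1 - γ) / 2 ^ (1 - γ) := by
    rw [Real.rpow_pow_comm zero_le_two, ← Real.div_rpow (by linarith) zero_le_two]
    exact Real.rpow_le_rpow_of_nonpos (by positivity) (by rw [pow_succ] at hTa; linarith)
      (by linarith)
  calc (#{v | T < G.degree v} : ℝ)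
      ≤ 2 * c₀ * Fintype.card V * ((2 : ℝ) ^ (1 - γ)) ^ a / (1 - 2 ^ (1 - γ)) :=
        (Nat.cast_le.mpr hsub).trans (hG.card_two_pow_le_degree_le hc₀ hγ a)
    _ ≤ 2 * c₀ * Fintype.card V * (T ^ (1 - γ) / 2 ^ (1 - γ)) / (1 - 2 ^ (1 - γ)) := by
        gcongr
    _ = 2 / 2 ^ (1 - γ) * c₀ / (1 - 2 ^ (1 - γ)) * Fintype.card V * T ^ (1 - γ) := by ring
    _ = 2 ^ γ * c₀ / (1 - 2 ^ (1 - γ)) * Fintype.card V * T ^ (1 - γ) := by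
        rw [← Real.rpow_one_sub' zero_le_two (by rw [sub_sub_cancel]; positivity), sub_sub_cancel]

end IsPLB

/-- The degeneracy of a PLB graph with exponent `γ > 1` is at most `C n^(1/γ)`:
every nonempty induced subgraph has a vertex of induced degree at most `C n^(1/γ)`. -/
theorem plb_degeneracy_bound (γ c₀ : ℝ) (hγ : 1 < γ) (hc₀ : 0 < c₀) :
    ∃ C : ℝ, 0 < C ∧
      ∀ (V : Type) [Fintype V] (G : SimpleGraph V), IsPLB G γ c₀ →
        ∀ A : Set V, A.Nonempty → ∃ v : A,
          ({u : A | (G.induce A).Adj v u}.ncard : ℝ) ≤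
            C * (Fintype.card V : ℝ) ^ (1 / γ) := by
  classical
  set K := 2 ^ γ * c₀ / (1 - 2 ^ (1 - γ))
  have hK0 : 0 ≤ K := div_nonneg (by positivity)
    (sub_nonneg.mpr (Real.rpow_le_one_of_one_le_of_nonpos one_le_two (by linarith)))
  set C := max 1 (K ^ γ⁻¹)
  refine ⟨C, by positivity, fun V _ G hG A hA ↦ G.exists_induce_ncard_adj_le A hA ?_⟩
  set n := (Fintype.card V : ℝ)
  set T := C * n ^ (1 / γ)
  have hn : 1 ≤ n := Nat.one_le_cast.mpr (Fintype.card_pos_iff.mpr ⟨hA.some⟩)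
  have hT : 1 ≤ T := one_le_mul_of_one_le_of_one_le (le_max_left _ _)
    (Real.one_le_rpow hn (by positivity))
  have hTγ : T ^ γ = C ^ γ * n := by
    rw [Real.mul_rpow (by positivity) (by positivity), ← Real.rpow_mul (by positivity), one_div,
      inv_mul_cancel₀ (by positivity), Real.rpow_one]
  have hKC : K ≤ C ^ γ :=
    (Real.rpow_inv_le_iff_of_pos hK0 (by positivity) (by positivity)).mp (le_max_right _ _)
  calc (#{v | T < G.degree v} : ℝ)
      ≤ K * n * T ^ (1 - γ) := hG.card_lt_degree_le hc₀.le hγ hT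
    _ = K * n / T ^ γ * T := by
        rw [Real.rpow_sub (by positivity), Real.rpow_one]
        ring
    _ ≤ T := by
        refine mul_le_of_le_one_left (by positivity) (div_le_one_of_le₀ ?_ (by positivity))
        rw [hTγ]
        gcongr
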